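/- arXiv:1006.5295 — 3 statements merged into one kernel-verified Lean document; each statement's English description precedes it below -/
import Mathlib

section
/- Division Theorem (existence and uniqueness of quotients and remainder): Let f_1,…,f_m ∈ k[[x]]^p be a monic standard basis of the submodule they generate, with in(f_i) = x^{(α^i, j_i)}. Let S = S_1 ⊎ … ⊎ S_m be a partition of the support of in(⟨f_1,…,f_m⟩) with S_i ⊆ supp(k[[x]]·in(f_i)). Then for every f ∈ k[[x]]^p there exist unique g_1,…,g_m ∈ k[[x]] and a unique h ∈ k[[x]]^p such that f = g_1 f_1 + … + g_m f_m + h, with supp(g_i) ⊆ p_1(S_i) − α^i for each i and supp(h) ⊆ (ℕⁿ × {1,…,p}) \ S. -/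
noncomputable section

open MvPowerSeries

variable {k : Type} [Field k]

/-- Value of the positive linear form given by the weights `w` on a multi-exponent. -/
def Lval {n : ℕ} (w : Fin n → ℝ) (d : Fin n →₀ ℕ) : ℝ :=
  d.sum fun i e => w i * (e : ℝ)

/-- Lexicographic comparison of multi-exponents. -/
def lexLt {n : ℕ} (α β : Fin n →₀ ℕ) : Prop :=
  ∃ i, α i < β i ∧ ∀ j, j < i → α j = β j

/-- The module order on the indices `(α, j)` of monomial vectors: first compare the
`L`-degrees, ties are broken lexicographically in `(α, j)`. -/
def modLt {n p : ℕ} (w : Fin n → ℝ) (x y : (Fin n →₀ ℕ) × Fin p) : Prop :=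
  Lval w x.1 < Lval w y.1 ∨
    (Lval w x.1 = Lval w y.1 ∧ (lexLt x.1 y.1 ∨ (x.1 = y.1 ∧ x.2 < y.2)))

/-- Support of a vector of power series. -/
def suppV {n p : ℕ} (a : Fin p → MvPowerSeries (Fin n) k) : Set ((Fin n →₀ ℕ) × Fin p) :=
  {ι | MvPowerSeries.coeff ι.1 (a ι.2) ≠ 0}

/-- `ι` is the initial index of `a`: it lies in the support and is minimal for the
module order. -/
def IsInitial {n p : ℕ} (w : Fin n → ℝ) (a : Fin p → MvPowerSeries (Fin n) k)
    (ι : (Fin n →₀ ℕ) × Fin p) : Prop :=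
  ι ∈ suppV a ∧ ∀ κ ∈ suppV a, κ ≠ ι → modLt w ι κ

/-- The monomial vector `x^{(α,j)}`. -/
def monVec {n p : ℕ} (ι : (Fin n →₀ ℕ) × Fin p) : Fin p → MvPowerSeries (Fin n) k :=
  fun j => if j = ι.2 then MvPowerSeries.monomial ι.1 1 else 0

/-- The initial module of a submodule `M ⊆ k[[x]]^p`: the module generated by the initial
monomial vectors of elements of `M`. -/
def initialModule {n p : ℕ} (w : Fin n → ℝ)
    (M : Submodule (MvPowerSeries (Fin n) k) (Fin p → MvPowerSeries (Fin n) k)) :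
    Submodule (MvPowerSeries (Fin n) k) (Fin p → MvPowerSeries (Fin n) k) :=
  Submodule.span _ {v | ∃ a ∈ M, ∃ ι, IsInitial w a ι ∧ v = monVec ι}

/-- The support of a monomial submodule: the set of indices of monomial vectors in it. -/
def suppSet {n p : ℕ}
    (N : Submodule (MvPowerSeries (Fin n) k) (Fin p → MvPowerSeries (Fin n) k)) :
    Set ((Fin n →₀ ℕ) × Fin p) :=
  {ι | monVec ι ∈ N}

/-! Encode a candidate pair `(g, h)` by a single coefficient function `c` on the indices `(α, j)`
of monomial vectors: `c κ` is the coefficient of `g_i` at `κ - α^i` if `κ ∈ S_i`, and the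
coefficient of `h` at `κ` if `κ ∉ S`. Since `f_i` is `x^{(α^i, j_i)}` plus terms above its initial
index, the `κ`-coefficient of `∑ g_i f_i + h` is `c κ` plus a combination of values of `c`
strictly below `κ`: the map from `c` to the coefficients of `∑ g_i f_i + h` is unitriangular for
the module order. Positive weights leave only finitely many indices below any given one, so the
order is well-founded, and a unitriangular map for a well-founded order is bijective. -/

theorem wellFounded_of_finite_setOf_rel {α : Type*} {r : α → α → Prop} [IsStrictOrder α r]
    (h : ∀ a, {b | r b a}.Finite) : WellFounded r :=
  ⟨fun a => (Set.WellFoundedOn.acc_iff_wellFoundedOn.out 0 2).2 <| by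
    rw [Relation.transGen_eq_self]
    exact (h a).wellFoundedOn⟩

theorem AddMonoidHom.bijective_of_unitriangular {ι M : Type*} [AddCommGroup M]
    {r : ι → ι → Prop} (hr : WellFounded r) (Φ : (ι → M) →+ (ι → M))
    (hΦ : ∀ c κ, (∀ l, r l κ → c l = 0) → Φ c κ = c κ) : Function.Bijective Φ := by
  have sub_eq_of_eqOn_below : ∀ c c' κ, (∀ l, r l κ → c l = c' l) →
      Φ c κ - c κ = Φ c' κ - c' κ := by
    intro c c' κ h
    have := hΦ (c - c') κ fun l hl => sub_eq_zero.2 (h l hl)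
    rw [map_sub, Pi.sub_apply, Pi.sub_apply] at this
    rw [sub_eq_sub_iff_sub_eq_sub, this]
  classical
  refine ⟨(injective_iff_map_eq_zero Φ).2 fun c hc => ?_, fun d => ?_⟩
  · by_contra hne
    obtain ⟨κ, hκ, hmin⟩ := hr.has_min {κ | c κ ≠ 0} (Function.ne_iff.1 hne)
    refine hκ ?_
    rw [← hΦ c κ fun l hl => not_not.1 fun h => hmin l h hl, hc, Pi.zero_apply]
  · let below (c : ι → M) (κ : ι) : ι → M := fun l => if r l κ then c l else 0
    obtain ⟨c, hc⟩ : ∃ c : ι → M, ∀ κ, c κ = d κ - Φ (below c κ) κ :=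
      ⟨hr.fix fun κ rec => d κ - Φ (fun l => if h : r l κ then rec l h else 0) κ,
        fun κ => hr.fix_eq _ κ⟩
    refine ⟨c, funext fun κ => ?_⟩
    have key := sub_eq_of_eqOn_below c (below c κ) κ fun l hl => (if_pos hl).symm
    rw [show below c κ κ = 0 from if_neg (hr.irrefl.irrefl κ), sub_zero,
      sub_eq_iff_eq_add] at key
    rw [key, hc κ, add_sub_cancel]

section MonomialOrder

variable {n p : ℕ} (w : Fin n → ℝ)

lemma Lval_eq_sum (d : Fin n →₀ ℕ) : Lval w d = ∑ i, w i * (d i : ℝ) :=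
  Finsupp.sum_fintype _ _ fun i => by simp

lemma Lval_add (a b : Fin n →₀ ℕ) : Lval w (a + b) = Lval w a + Lval w b := by
  simp [Lval_eq_sum, mul_add, Finset.sum_add_distrib]

lemma lexLt_trans {α β γ : Fin n →₀ ℕ} (h1 : lexLt α β) (h2 : lexLt β γ) : lexLt α γ := by
  obtain ⟨i, hi, hij⟩ := h1
  obtain ⟨i', hi', hij'⟩ := h2
  rcases lt_trichotomy i i' with h | rfl | h
  · exact ⟨i, hi.trans_eq (hij' i h), fun j hj => (hij j hj).trans (hij' j (hj.trans h))⟩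
  · exact ⟨i, hi.trans hi', fun j hj => (hij j hj).trans (hij' j hj)⟩
  · exact ⟨i', (hij i' h).trans_lt hi', fun j hj => (hij j (hj.trans h)).trans (hij' j hj)⟩

lemma lexLt_add_left (γ : Fin n →₀ ℕ) {α β : Fin n →₀ ℕ} (h : lexLt α β) :
    lexLt (γ + α) (γ + β) := by
  obtain ⟨i, hi, hij⟩ := h
  exact ⟨i, by simpa using hi, fun j hj => by simp [hij j hj]⟩

instance : IsStrictOrder ((Fin n →₀ ℕ) × Fin p) (modLt w) where
  irrefl x := by
    rintro (h | ⟨-, ⟨i, h, -⟩ | ⟨-, h⟩⟩) <;> exact lt_irrefl _ h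
  trans x y z := by
    rintro (hxy | ⟨exy, hxy⟩) (hyz | ⟨eyz, hyz⟩)
    · exact Or.inl (hxy.trans hyz)
    · exact Or.inl (hxy.trans_eq eyz)
    · exact Or.inl (exy.trans_lt hyz)
    · refine Or.inr ⟨exy.trans eyz, ?_⟩
      rcases hxy with hxy | ⟨exy, hxy⟩ <;> rcases hyz with hyz | ⟨eyz, hyz⟩
      · exact Or.inl (lexLt_trans hxy hyz)
      · exact Or.inl (eyz ▸ hxy)
      · exact Or.inl (exy ▸ hyz)
      · exact Or.inr ⟨exy.trans eyz, hxy.trans hyz⟩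

lemma modLt_add_left (γ : Fin n →₀ ℕ) {x y : (Fin n →₀ ℕ) × Fin p} (h : modLt w x y) :
    modLt w (γ + x.1, x.2) (γ + y.1, y.2) := by
  rcases h with h | ⟨e, h | ⟨q, r⟩⟩
  · exact Or.inl (by simp only [Lval_add]; linarith)
  · exact Or.inr ⟨by simp [Lval_add, e], Or.inl (lexLt_add_left γ h)⟩
  · exact Or.inr ⟨by simp [Lval_add, e], Or.inr ⟨by rw [q], r⟩⟩

variable {w}

lemma finite_setOf_Lval_le (hw : ∀ i, 0 < w i) (C : ℝ) :
    {d : Fin n →₀ ℕ | Lval w d ≤ C}.Finite := by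
  refine (Set.finite_Iic (Finsupp.equivFunOnFinite.symm fun i => ⌈C / w i⌉₊)).subset ?_
  intro d hd
  rw [Set.mem_Iic, Finsupp.le_def]
  intro i
  have hi : w i * (d i : ℝ) ≤ C := by
    refine le_trans ?_ (hd : Lval w d ≤ C)
    rw [Lval_eq_sum]
    exact Finset.single_le_sum (fun j _ => mul_nonneg (hw j).le (Nat.cast_nonneg _))
      (Finset.mem_univ i)
  have : (d i : ℝ) ≤ ⌈C / w i⌉₊ := ((le_div_iff₀' (hw i)).2 hi).trans (Nat.le_ceil _)
  exact_mod_cast this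

lemma wellFounded_modLt (hw : ∀ i, 0 < w i) : WellFounded (modLt w (p := p)) :=
  wellFounded_of_finite_setOf_rel fun κ =>
    ((finite_setOf_Lval_le hw (Lval w κ.1)).prod Set.finite_univ).subset
      fun _ h => ⟨h.elim le_of_lt fun h => h.1.le, trivial⟩

end MonomialOrder

section InitialTerm

variable {n p : ℕ} {w : Fin n → ℝ}

lemma coeff_monVec (ι κ : (Fin n →₀ ℕ) × Fin p) :
    coeff κ.1 (monVec ι κ.2 : MvPowerSeries (Fin n) k) = if κ = ι then 1 else 0 := by
  obtain ⟨α, j⟩ := ι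
  obtain ⟨β, j'⟩ := κ
  by_cases hj : j' = j <;> by_cases hα : β = α <;> simp [monVec, coeff_monomial, hj, hα]

lemma coeff_mul_monVec (q : MvPowerSeries (Fin n) k) (ι κ : (Fin n →₀ ℕ) × Fin p) :
    coeff κ.1 (q * monVec ι κ.2) =
      if ι.2 = κ.2 ∧ ι.1 ≤ κ.1 then coeff (κ.1 - ι.1) q else 0 := by
  by_cases hj : ι.2 = κ.2
  · simp [monVec, coeff_mul_monomial, hj]
  · simp [monVec, hj, Ne.symm hj]

lemma IsInitial.modLt_of_mem_suppV_sub_monVec {a : Fin p → MvPowerSeries (Fin n) k}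
    {ι κ : (Fin n →₀ ℕ) × Fin p} (ha : IsInitial w a ι) (hmonic : coeff ι.1 (a ι.2) = 1)
    (hκ : κ ∈ suppV (a - monVec ι)) : modLt w ι κ := by
  have hκι : κ ≠ ι := by
    rintro rfl
    exact hκ (by simp [coeff_monVec, hmonic])
  refine ha.2 κ ?_ hκι
  simpa [suppV, coeff_monVec, hκι] using hκ

lemma coeff_mul_eq_zero_of_modLt {r : Fin p → MvPowerSeries (Fin n) k}
    {ι κ : (Fin n →₀ ℕ) × Fin p} (hr : ∀ κ' ∈ suppV r, modLt w ι κ')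
    {q : MvPowerSeries (Fin n) k} (hq : ∀ β, modLt w (β + ι.1, ι.2) κ → coeff β q = 0) :
    coeff κ.1 (q * r κ.2) = 0 := by
  rw [coeff_mul]
  refine Finset.sum_eq_zero fun bc hbc => ?_
  by_cases hc : coeff bc.2 (r κ.2) = 0
  · rw [hc, mul_zero]
  · have := modLt_add_left w bc.1 (hr (bc.2, κ.2) hc)
    rw [Finset.HasAntidiagonal.mem_antidiagonal.1 hbc] at this
    rw [hq bc.1 this, zero_mul]

lemma IsInitial.coeff_mul {a : Fin p → MvPowerSeries (Fin n) k}
    {ι κ : (Fin n →₀ ℕ) × Fin p} (ha : IsInitial w a ι) (hmonic : coeff ι.1 (a ι.2) = 1)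
    {q : MvPowerSeries (Fin n) k} (hq : ∀ β, modLt w (β + ι.1, ι.2) κ → coeff β q = 0) :
    coeff κ.1 (q * a κ.2) = if ι.2 = κ.2 ∧ ι.1 ≤ κ.1 then coeff (κ.1 - ι.1) q else 0 := by
  have htail := coeff_mul_eq_zero_of_modLt
    (fun κ' => ha.modLt_of_mem_suppV_sub_monVec hmonic) hq
  rw [← add_sub_cancel (monVec ι) a, Pi.add_apply, mul_add, map_add, coeff_mul_monVec, htail,
    add_zero]

end InitialTerm

section DivisionMap

variable {n p m : ℕ} (ι : Fin m → (Fin n →₀ ℕ) × Fin p)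
  (S : Fin m → Set ((Fin n →₀ ℕ) × Fin p))

def divQuot (c : (Fin n →₀ ℕ) × Fin p → k) (i : Fin m) : MvPowerSeries (Fin n) k :=
  fun β => (S i).indicator c (β + (ι i).1, (ι i).2)

def divRem (c : (Fin n →₀ ℕ) × Fin p → k) (j : Fin p) : MvPowerSeries (Fin n) k :=
  fun γ => (⋃ i, S i)ᶜ.indicator c (γ, j)

lemma coeff_divQuot (c : (Fin n →₀ ℕ) × Fin p → k) (i : Fin m) (β : Fin n →₀ ℕ) :
    coeff β (divQuot ι S c i) = (S i).indicator c (β + (ι i).1, (ι i).2) :=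
  rfl

lemma coeff_divRem (c : (Fin n →₀ ℕ) × Fin p → k) (κ : (Fin n →₀ ℕ) × Fin p) :
    coeff κ.1 (divRem S c κ.2) = (⋃ i, S i)ᶜ.indicator c κ :=
  rfl

lemma divQuot_add (c c' : (Fin n →₀ ℕ) × Fin p → k) :
    divQuot ι S (c + c') = divQuot ι S c + divQuot ι S c' := by
  funext i
  ext β
  simp [coeff_divQuot, Set.indicator_add']

lemma divRem_add (c c' : (Fin n →₀ ℕ) × Fin p → k) :
    divRem S (c + c') = divRem S c + divRem S c' := by
  funext j
  ext γ
  exact congrFun (Set.indicator_add' _ c c') (γ, j)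

def divisionMap (f : Fin m → Fin p → MvPowerSeries (Fin n) k) :
    ((Fin n →₀ ℕ) × Fin p → k) →+ ((Fin n →₀ ℕ) × Fin p → k) :=
  AddMonoidHom.mk' (fun c κ => coeff κ.1 ((∑ i, divQuot ι S c i • f i + divRem S c) κ.2))
    fun c c' => by
      funext κ
      simp only [divQuot_add, divRem_add, Pi.add_apply, add_smul, Finset.sum_add_distrib,
        map_add]
      abel

variable {ι S}

lemma divisionMap_apply_of_forall_modLt {w : Fin n → ℝ}
    {f : Fin m → Fin p → MvPowerSeries (Fin n) k}
    (hinit : ∀ i, IsInitial w (f i) (ι i)) (hmonic : ∀ i, coeff (ι i).1 (f i (ι i).2) = 1)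
    (hS : ∀ i i', i ≠ i' → Disjoint (S i) (S i'))
    (hSsub : ∀ i, S i ⊆ {κ | κ.2 = (ι i).2 ∧ (ι i).1 ≤ κ.1})
    (c : (Fin n →₀ ℕ) × Fin p → k) (κ : (Fin n →₀ ℕ) × Fin p)
    (hc : ∀ l, modLt w l κ → c l = 0) : divisionMap ι S f c κ = c κ := by
  have hquot : ∀ i, coeff κ.1 (divQuot ι S c i * f i κ.2) = (S i).indicator c κ := by
    intro i
    rw [(hinit i).coeff_mul (hmonic i) (q := divQuot ι S c i) fun β hβ =>
      (coeff_divQuot ι S c i β).trans (Set.indicator_apply_eq_zero.2 fun _ => hc _ hβ)]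
    split_ifs with h
    · rw [coeff_divQuot, tsub_add_cancel_of_le h.2, h.1]
    · refine (Set.indicator_of_notMem (fun hκ => h ?_) _).symm
      exact ⟨(hSsub i hκ).1.symm, (hSsub i hκ).2⟩
  change coeff κ.1 ((∑ i, divQuot ι S c i • f i + divRem S c) κ.2) = c κ
  simp only [Pi.add_apply, Finset.sum_apply, Pi.smul_apply, smul_eq_mul, map_add, map_sum, hquot,
    coeff_divRem]
  rw [← Finset.indicator_biUnion_apply _ _ fun i _ j _ hij => hS i j hij]
  simpa using Set.indicator_self_add_compl_apply (⋃ i, S i) c κ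

lemma exists_divQuot_eq_and_divRem_eq (hS : ∀ i i', i ≠ i' → Disjoint (S i) (S i'))
    (hSsub : ∀ i, S i ⊆ {κ | κ.2 = (ι i).2 ∧ (ι i).1 ≤ κ.1})
    {g : Fin m → MvPowerSeries (Fin n) k} {h : Fin p → MvPowerSeries (Fin n) k}
    (hg : ∀ i β, coeff β (g i) ≠ 0 → ∃ j, (β + (ι i).1, j) ∈ S i)
    (hh : ∀ κ ∈ suppV h, κ ∉ ⋃ i, S i) :
    ∃ c, divQuot ι S c = g ∧ divRem S c = h := by
  let G (i : Fin m) (κ : (Fin n →₀ ℕ) × Fin p) : k := coeff (κ.1 - (ι i).1) (g i)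
  let H (κ : (Fin n →₀ ℕ) × Fin p) : k := coeff κ.1 (h κ.2)
  have hSi : ∀ i κ, κ ∈ S i → ∑ i', (S i').indicator (G i') κ = G i κ := fun i κ hκ =>
    (Finset.sum_eq_single i (fun i' _ hi' => Set.indicator_of_notMem
      (Set.disjoint_right.1 (hS i' i hi') hκ) _) (by simp)).trans (Set.indicator_of_mem hκ _)
  refine ⟨fun κ => ∑ i, (S i).indicator (G i) κ + (⋃ i, S i)ᶜ.indicator H κ, ?_, ?_⟩
  · funext i
    ext β
    rw [coeff_divQuot]
    by_cases hβ : (β + (ι i).1, (ι i).2) ∈ S i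
    · rw [Set.indicator_of_mem hβ, hSi i _ hβ,
        Set.indicator_of_notMem (Set.notMem_compl_iff.2 (Set.mem_iUnion_of_mem i hβ))]
      simp [G]
    · rw [Set.indicator_of_notMem hβ]
      by_contra hne
      obtain ⟨j, hj⟩ := hg i β (Ne.symm hne)
      exact hβ ((hSsub i hj).1 ▸ hj)
  · funext j
    ext γ
    refine (coeff_divRem S _ (γ, j)).trans ?_
    by_cases hγ : (γ, j) ∈ ⋃ i, S i
    · rw [Set.indicator_of_notMem (Set.notMem_compl_iff.2 hγ)]
      exact (not_not.1 fun hne => hh _ hne hγ).symm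
    · rw [Set.indicator_of_mem (Set.mem_compl hγ), Set.indicator_of_mem (Set.mem_compl hγ),
        Finset.sum_eq_zero fun i _ =>
          Set.indicator_of_notMem (fun hi => hγ (Set.mem_iUnion_of_mem i hi)) _, zero_add]

end DivisionMap

theorem division_theorem_existence_uniqueness_general
    {n p m : ℕ}
    (w : Fin n → ℝ) (hw : ∀ i, 0 < w i)
    (f : Fin m → Fin p → MvPowerSeries (Fin n) k)
    (ι : Fin m → (Fin n →₀ ℕ) × Fin p)
    (hinit : ∀ i, IsInitial w (f i) (ι i))
    (hmonic : ∀ i, MvPowerSeries.coeff (ι i).1 (f i (ι i).2) = 1)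
    (S : Fin m → Set ((Fin n →₀ ℕ) × Fin p))
    (hSdisj : ∀ i i', i ≠ i' → Disjoint (S i) (S i'))
    (hSsub : ∀ i, S i ⊆ {κ | κ.2 = (ι i).2 ∧ (ι i).1 ≤ κ.1}) :
    ∀ F : Fin p → MvPowerSeries (Fin n) k,
      ∃! gh : (Fin m → MvPowerSeries (Fin n) k) × (Fin p → MvPowerSeries (Fin n) k),
        F = (∑ i, gh.1 i • f i) + gh.2 ∧
        (∀ i (β : Fin n →₀ ℕ), MvPowerSeries.coeff β (gh.1 i) ≠ 0 →
          ∃ j, (β + (ι i).1, j) ∈ S i) ∧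
        (∀ κ ∈ suppV gh.2, κ ∉ ⋃ i, S i) := by
  intro F
  have hbij : Function.Bijective (divisionMap ι S f) :=
    (divisionMap ι S f).bijective_of_unitriangular (wellFounded_modLt hw)
      (divisionMap_apply_of_forall_modLt hinit hmonic hSdisj hSsub)
  obtain ⟨c, hc⟩ := hbij.2 fun κ => coeff κ.1 (F κ.2)
  refine ⟨(divQuot ι S c, divRem S c), ⟨?_, fun i β hβ => ⟨_, Set.mem_of_indicator_ne_zero hβ⟩,
    fun κ hκ => Set.mem_of_indicator_ne_zero hκ⟩, ?_⟩
  · funext j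
    ext γ
    exact (congrFun hc (γ, j)).symm
  · rintro ⟨g, h⟩ ⟨rfl, hg, hh⟩
    obtain ⟨c', rfl, rfl⟩ := exists_divQuot_eq_and_divRem_eq hSdisj hSsub hg hh
    rw [hbij.1 hc]

/-- **Division Theorem (existence and uniqueness of quotients and remainder).**
Let `f_1,…,f_m ∈ k[[x]]^p` be a monic standard basis with `in(f_i) = x^{(α^i,j_i)}` and let
`S = S_1 ⊎ … ⊎ S_m` be a partition of the support of the initial module, with
`S_i ⊆ supp(k[[x]]·in(f_i))`.  Then every `f ∈ k[[x]]^p` has unique quotients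
`g_1,…,g_m ∈ k[[x]]` and remainder `h ∈ k[[x]]^p` with `f = Σ g_i f_i + h`,
`supp(g_i) ⊆ p_1(S_i) − α^i` and `supp(h) ∩ S = ∅`. -/
theorem division_theorem_existence_uniqueness
    [CharZero k] {n p m : ℕ}
    (w : Fin n → ℝ) (hw : ∀ i, 0 < w i)
    (f : Fin m → Fin p → MvPowerSeries (Fin n) k)
    (ι : Fin m → (Fin n →₀ ℕ) × Fin p)
    (hinit : ∀ i, IsInitial w (f i) (ι i))
    (hmonic : ∀ i, MvPowerSeries.coeff (ι i).1 (f i (ι i).2) = 1)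
    (hstd : initialModule w (Submodule.span _ (Set.range f)) =
      Submodule.span _ {v | ∃ i, v = monVec (ι i)})
    (S : Fin m → Set ((Fin n →₀ ℕ) × Fin p))
    (hScover : (⋃ i, S i) = suppSet (initialModule w (Submodule.span _ (Set.range f))))
    (hSdisj : ∀ i i', i ≠ i' → Disjoint (S i) (S i'))
    (hSsub : ∀ i, S i ⊆ {κ | κ.2 = (ι i).2 ∧ (ι i).1 ≤ κ.1}) :
    ∀ F : Fin p → MvPowerSeries (Fin n) k,
      ∃! gh : (Fin m → MvPowerSeries (Fin n) k) × (Fin p → MvPowerSeries (Fin n) k),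
        F = (∑ i, gh.1 i • f i) + gh.2 ∧
        (∀ i (β : Fin n →₀ ℕ), MvPowerSeries.coeff β (gh.1 i) ≠ 0 →
          ∃ j, (β + (ι i).1, j) ∈ S i) ∧
        (∀ κ ∈ suppV gh.2, κ ∉ ⋃ i, S i) :=
  division_theorem_existence_uniqueness_general w hw f ι hinit hmonic S hSdisj hSsub
end
end

section
/- Existence of scissions for textile linear maps: Every textile linear map ℓ : A → A admits a textile linear scission, i.e. there exists a textile linear map σ : A → A with ℓ∘σ∘ℓ = ℓ. -/
noncomputable section

/-- An `ℕ²`-matrix is row-finite if every row has finitely many nonzero entries; such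
matrices correspond exactly to textile linear maps `A → A` on the arc space `A = k^ℕ`. -/
def RowFinite {k : Type} [Field k] (M : ℕ → ℕ → k) : Prop :=
  ∀ i, {j | M i j ≠ 0}.Finite

/-- The textile linear map associated to a row-finite `ℕ²`-matrix. -/
def mApply {k : Type} [Field k] (M : ℕ → ℕ → k) (a : ℕ → k) : ℕ → k :=
  fun i => ∑ᶠ j, M i j * a j

/-!
A row-finite `ℕ²`-matrix `M` is the transpose of the endomorphism `μ` of `k^(ℕ) = ℕ →₀ k` sending
`single i 1` to the `i`-th row of `M`, and `mApply M` is the dual map of `μ` on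
`k^ℕ = (k^(ℕ))^*`. Every linear map `μ` between vector spaces has a generalized inverse `ν`
with `μ ν μ = μ` (invert `μ` on its range and extend by a projection onto the range), and
dualizing this identity gives a row-finite `S` with `M S M = M`.
-/

theorem LinearMap.exists_comp_comp_eq_self {K V W : Type*} [DivisionRing K]
    [AddCommGroup V] [Module K V] [AddCommGroup W] [Module K W] (f : V →ₗ[K] W) :
    ∃ g : W →ₗ[K] V, f ∘ₗ g ∘ₗ f = f := by
  obtain ⟨π, hπ⟩ := f.range.subtype.exists_leftInverse_of_injective f.range.ker_subtype
  obtain ⟨s, hs⟩ := f.rangeRestrict.exists_rightInverse_of_surjective f.range_rangeRestrict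
  refine ⟨s ∘ₗ π, LinearMap.ext fun x => ?_⟩
  have hπx : π (f x) = f.rangeRestrict x := LinearMap.congr_fun hπ (f.rangeRestrict x)
  have hsy : ∀ y, f (s y) = y := fun y => congr_arg Subtype.val (LinearMap.congr_fun hs y)
  simp [hπx, hsy]

namespace Finsupp

theorem linearCombination_map_single_one {R M ι : Type*} [CommSemiring R] [AddCommMonoid M]
    [Module R M] (L : (ι →₀ R) →ₗ[R] M) : linearCombination R (fun p => L (single p 1)) = L :=
  lhom_ext fun p c => by
    rw [linearCombination_single, ← map_smul, smul_single_one]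

theorem finsum_mul_eq_linearCombination {R ι : Type*} [CommSemiring R]
    (f : ι →₀ R) (a : ι → R) : ∑ᶠ j, f j * a j = linearCombination R a f := by
  rw [linearCombination_apply, Finsupp.sum]
  refine finsum_eq_finsetSum_of_support_subset _ fun j hj => ?_
  simp only [Finset.mem_coe, mem_support_iff]
  exact left_ne_zero_of_mul hj

end Finsupp

section RowMatrix

variable {k : Type} [Field k]

def rowMatrix (φ : (ℕ →₀ k) →ₗ[k] (ℕ →₀ k)) : ℕ → ℕ → k :=
  fun i j => φ (Finsupp.single i 1) j

theorem rowFinite_rowMatrix (φ : (ℕ →₀ k) →ₗ[k] (ℕ →₀ k)) : RowFinite (rowMatrix φ) :=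
  fun i => (φ (Finsupp.single i 1)).hasFiniteSupport

theorem exists_rowMatrix_eq {M : ℕ → ℕ → k} (hM : RowFinite M) :
    ∃ φ : (ℕ →₀ k) →ₗ[k] (ℕ →₀ k), rowMatrix φ = M :=
  ⟨Finsupp.linearCombination k fun i => Finsupp.ofSupportFinite (M i) (hM i), by
    ext i j
    simp only [rowMatrix, Finsupp.linearCombination_single, one_smul]
    rfl⟩

theorem mApply_rowMatrix (φ : (ℕ →₀ k) →ₗ[k] (ℕ →₀ k)) (a : ℕ → k) (i : ℕ) :
    mApply (rowMatrix φ) a i = Finsupp.linearCombination k a (φ (Finsupp.single i 1)) :=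
  Finsupp.finsum_mul_eq_linearCombination _ a

theorem mApply_rowMatrix_mApply_rowMatrix (φ ψ : (ℕ →₀ k) →ₗ[k] (ℕ →₀ k)) (a : ℕ → k) :
    mApply (rowMatrix φ) (mApply (rowMatrix ψ) a) = mApply (rowMatrix (ψ ∘ₗ φ)) a := by
  ext i
  have hrow : mApply (rowMatrix ψ) a =
      fun q => (Finsupp.linearCombination k a ∘ₗ ψ) (Finsupp.single q 1) :=
    funext (mApply_rowMatrix ψ a)
  rw [mApply_rowMatrix, mApply_rowMatrix, hrow, Finsupp.linearCombination_map_single_one,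
    LinearMap.comp_apply, LinearMap.comp_apply]

end RowMatrix

theorem scission_exists_textile_linear_general
    {k : Type} [Field k]
    (M : ℕ → ℕ → k) (hM : RowFinite M) :
    ∃ S : ℕ → ℕ → k, RowFinite S ∧
      ∀ a, mApply M (mApply S (mApply M a)) = mApply M a := by
  obtain ⟨μ, rfl⟩ := exists_rowMatrix_eq hM
  obtain ⟨ν, hν⟩ := μ.exists_comp_comp_eq_self
  refine ⟨rowMatrix ν, rowFinite_rowMatrix ν, fun a => ?_⟩
  rw [mApply_rowMatrix_mApply_rowMatrix, mApply_rowMatrix_mApply_rowMatrix, hν]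

/-- **Existence of scissions for textile linear maps.**
Every textile linear map `ℓ : A → A` on the arc space admits a textile linear scission `σ`,
i.e. `ℓ∘σ∘ℓ = ℓ`. -/
theorem scission_exists_textile_linear
    {k : Type} [Field k] [CharZero k]
    (M : ℕ → ℕ → k) (hM : RowFinite M) :
    ∃ S : ℕ → ℕ → k, RowFinite S ∧
      ∀ a, mApply M (mApply S (mApply M a)) = mApply M a :=
  scission_exists_textile_linear_general M hM
end
end

section
/- Rank Theorem for textile maps: Let f : U → C^p be a textile map on an m-adic neighbourhood U = m^l·C^m of 0 with f(0) = 0. Write f = ℓ + h with ℓ = T_0 f the tangent map of f at 0. Assume that ℓ admits a scission σ : C^p → C^m for which σ∘h is contractive on U, and that f has constant rank at 0 with respect to ker(ℓσ). Then there exist textile maps u : U → C^m and v : f(U) → C^p, invertible locally at 0, such that v ∘ f ∘ u^{-1} = ℓ. -/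
/-!
Applying the uniqueness in the constant rank condition to the zero curve shows that `ℓ = T_0 f`
is injective, so the scission is a left inverse, `σ ∘ ℓ = id`, and `u := σ ∘ f = id + σ ∘ h`.
As `σ ∘ h` is contractive, the fixed-point iteration `x ↦ b - σ (h x)` inverts `u`
coefficientwise, and this inverse is textile. With `g := f ∘ u⁻¹ ∘ σ`, the map
`v := id + (ℓ ∘ σ - g)` sends `f a` to `ℓ (σ (f a)) = ℓ (u a)`, and it is inverted on `f(U)` by
`id - (ℓ ∘ σ - g)`, because `ℓ ∘ σ - g` takes the same value at `f a` and at `ℓ (u a)`.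
-/

noncomputable section

open MvPowerSeries

/-- Coefficient family of a vector of cords. -/
def cf {k : Type} [Field k] {n q : ℕ} (c : Fin q → MvPowerSeries (Fin n) k) :
    Fin q × (Fin n →₀ ℕ) → k :=
  fun ν => MvPowerSeries.coeff ν.2 (c ν.1)

/-- Data of a textile map `C^q → C^p`. -/
def TexData (k : Type) [Field k] (n q p : ℕ) : Type :=
  Fin p × (Fin n →₀ ℕ) → MvPolynomial (Fin q × (Fin n →₀ ℕ)) k

/-- Evaluation of textile data. -/
def TexData.eval {k : Type} [Field k] {n q p : ℕ} (F : TexData k n q p)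
    (c : Fin q → MvPowerSeries (Fin n) k) : Fin p → MvPowerSeries (Fin n) k :=
  fun j => (fun d => MvPolynomial.eval (cf c) (F (j, d)) : (Fin n →₀ ℕ) → k)

/-- A map between cord spaces is textile if it is the evaluation of some textile data. -/
def IsTextile {k : Type} [Field k] {n q p : ℕ}
    (f : (Fin q → MvPowerSeries (Fin n) k) → Fin p → MvPowerSeries (Fin n) k) : Prop :=
  ∃ F : TexData k n q p, ∀ c, f c = F.eval c

/-- The tangent map `T_a f · v = Σ_ν ∂_ν f(a) · v_ν` of a textile map, obtained by
coefficientwise partial differentiation of the defining polynomials. -/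
def TexData.tangent {k : Type} [Field k] {n q p : ℕ} (F : TexData k n q p)
    (a v : Fin q → MvPowerSeries (Fin n) k) : Fin p → MvPowerSeries (Fin n) k :=
  fun j => (fun d => ∑ᶠ ν : Fin q × (Fin n →₀ ℕ),
    MvPolynomial.eval (cf a) (MvPolynomial.pderiv ν (F (j, d))) * cf v ν : (Fin n →₀ ℕ) → k)

/-- The order of a vector of cords, with values in `ℕ∞`. -/
def ordV {k : Type} [Field k] {n q : ℕ} (c : Fin q → MvPowerSeries (Fin n) k) : ℕ∞ :=
  sInf {N : ℕ∞ | ∃ (j : Fin q) (d : Fin n →₀ ℕ),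
    MvPowerSeries.coeff d (c j) ≠ 0 ∧ N = (d.sum fun _ e => e : ℕ)}

/-- The `m`-adic neighbourhood `m^l · C^q` of `0`. -/
def nbhd (k : Type) [Field k] (n q l : ℕ) : Set (Fin q → MvPowerSeries (Fin n) k) :=
  {c | ∀ (j : Fin q) (d : Fin n →₀ ℕ),
    (d.sum fun _ e => e) < l → MvPowerSeries.coeff d (c j) = 0}

/-- The `m`-adic neighbourhood `m^l` of `0` in `C` (parameter space of curves). -/
def cNbhd (k : Type) [Field k] (n l : ℕ) : Set (MvPowerSeries (Fin n) k) :=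
  {s | ∀ d : Fin n →₀ ℕ, (d.sum fun _ e => e) < l → MvPowerSeries.coeff d s = 0}

/-- Evaluation of a curve (textile data `C → C^q`) at a parameter cord `s`. -/
def CEval {k : Type} [Field k] {n q : ℕ} (γ : TexData k n 1 q)
    (s : MvPowerSeries (Fin n) k) : Fin q → MvPowerSeries (Fin n) k :=
  γ.eval (fun _ => s)

/-- `f` (given by textile data `F`) has constant rank at `0` with respect to `J`: for all
curves `γ` in `U` with `γ(0) = 0` and all curves `η` in `C^p` there are unique curves `ρ`
in `C^m` and `τ` in `J` with `η = T_γ f · ρ + τ`. -/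
def HasConstRankAtZero {k : Type} [Field k] {n m p : ℕ} (F : TexData k n m p)
    (U : Set (Fin m → MvPowerSeries (Fin n) k))
    (J : Set (Fin p → MvPowerSeries (Fin n) k)) : Prop :=
  ∀ (lV : ℕ) (γ : TexData k n 1 m),
    (∀ s ∈ cNbhd k n lV, CEval γ s ∈ U) → CEval γ 0 = 0 →
    ∀ η : TexData k n 1 p,
      ∃ (ρ : TexData k n 1 m) (τ : TexData k n 1 p),
        (∀ s ∈ cNbhd k n lV, CEval τ s ∈ J) ∧
        (∀ s ∈ cNbhd k n lV,
          CEval η s = F.tangent (CEval γ s) (CEval ρ s) + CEval τ s) ∧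
        (∀ (ρ' : TexData k n 1 m) (τ' : TexData k n 1 p),
          (∀ s ∈ cNbhd k n lV, CEval τ' s ∈ J) →
          (∀ s ∈ cNbhd k n lV,
            CEval η s = F.tangent (CEval γ s) (CEval ρ' s) + CEval τ' s) →
          ∀ s ∈ cNbhd k n lV, CEval ρ' s = CEval ρ s ∧ CEval τ' s = CEval τ s)

/-- `f` (given by textile data `F`) is flat at `0`: for every curve `γ` in `U` with
`γ(0) = 0`, evaluation at `s = 0` maps `ker(T_γ f)` surjectively onto `ker(T_0 f)`. -/
def FlatAtZero {k : Type} [Field k] {n m p : ℕ} (F : TexData k n m p)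
    (U : Set (Fin m → MvPowerSeries (Fin n) k)) : Prop :=
  ∀ (lV : ℕ) (γ : TexData k n 1 m),
    (∀ s ∈ cNbhd k n lV, CEval γ s ∈ U) → CEval γ 0 = 0 →
    ∀ v : Fin m → MvPowerSeries (Fin n) k, F.tangent 0 v = 0 →
      ∃ ρ : TexData k n 1 m,
        (∀ s ∈ cNbhd k n lV, F.tangent (CEval γ s) (CEval ρ s) = 0) ∧
        CEval ρ 0 = v

section TextileMaps

variable {k : Type} [Field k] {n q r p : ℕ}

theorem isTextile_iff_coeff
    {f : (Fin q → MvPowerSeries (Fin n) k) → Fin p → MvPowerSeries (Fin n) k} :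
    IsTextile f ↔ ∃ P : Fin p × (Fin n →₀ ℕ) → MvPolynomial (Fin q × (Fin n →₀ ℕ)) k,
      ∀ c j d, coeff d (f c j) = MvPolynomial.eval (cf c) (P (j, d)) :=
  ⟨fun ⟨F, hF⟩ => ⟨F, fun c j d => by rw [hF]; rfl⟩,
    fun ⟨P, hP⟩ => ⟨P, fun c => by ext j d; exact hP c j d⟩⟩

theorem IsTextile.comp {g : (Fin r → MvPowerSeries (Fin n) k) → Fin p → MvPowerSeries (Fin n) k}
    {f : (Fin q → MvPowerSeries (Fin n) k) → Fin r → MvPowerSeries (Fin n) k}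
    (hg : IsTextile g) (hf : IsTextile f) : IsTextile (fun c => g (f c)) := by
  obtain ⟨G, hG⟩ := isTextile_iff_coeff.1 hg
  obtain ⟨F, hF⟩ := isTextile_iff_coeff.1 hf
  refine isTextile_iff_coeff.2 ⟨fun jd => MvPolynomial.bind₁ F (G jd), fun c j d => ?_⟩
  have hcf : cf (f c) = fun ν => MvPolynomial.eval (cf c) (F ν) := funext fun ν => hF c ν.1 ν.2
  rw [hG, hcf]
  exact (MvPolynomial.eval₂Hom_bind₁ (RingHom.id k) (cf c) F (G (j, d))).symm

theorem isTextile_id : IsTextile (fun c : Fin q → MvPowerSeries (Fin n) k => c) :=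
  isTextile_iff_coeff.2 ⟨MvPolynomial.X, fun c j d => by rw [MvPolynomial.eval_X]; rfl⟩

theorem IsTextile.add {f g : (Fin q → MvPowerSeries (Fin n) k) → Fin p → MvPowerSeries (Fin n) k}
    (hf : IsTextile f) (hg : IsTextile g) : IsTextile (fun c => f c + g c) := by
  obtain ⟨F, hF⟩ := isTextile_iff_coeff.1 hf
  obtain ⟨G, hG⟩ := isTextile_iff_coeff.1 hg
  exact isTextile_iff_coeff.2 ⟨F + G, fun c j d => by simp [hF, hG]⟩

theorem IsTextile.sub {f g : (Fin q → MvPowerSeries (Fin n) k) → Fin p → MvPowerSeries (Fin n) k}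
    (hf : IsTextile f) (hg : IsTextile g) : IsTextile (fun c => f c - g c) := by
  obtain ⟨F, hF⟩ := isTextile_iff_coeff.1 hf
  obtain ⟨G, hG⟩ := isTextile_iff_coeff.1 hg
  exact isTextile_iff_coeff.2 ⟨F - G, fun c j d => by simp [hF, hG]⟩

theorem TexData.isTextile_eval (F : TexData k n q p) : IsTextile F.eval := ⟨F, fun _ => rfl⟩

theorem TexData.coeff_tangent (F : TexData k n q p) (a v : Fin q → MvPowerSeries (Fin n) k)
    (j : Fin p) (d : Fin n →₀ ℕ) :
    coeff d (F.tangent a v j) = ∑ ν ∈ (F (j, d)).vars,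
      MvPolynomial.eval (cf a) (MvPolynomial.pderiv ν (F (j, d))) * cf v ν := by
  refine finsum_eq_sum_of_support_subset _ fun ν hν => ?_
  by_contra hν'
  simp [MvPolynomial.pderiv_eq_zero_of_notMem_vars hν'] at hν

theorem TexData.isLinearMap_tangent (F : TexData k n q p) (a : Fin q → MvPowerSeries (Fin n) k) :
    IsLinearMap k (F.tangent a) where
  map_add v w := by
    ext j d
    simp only [Pi.add_apply, map_add, TexData.coeff_tangent, ← Finset.sum_add_distrib, ← mul_add]
    rfl
  map_smul c v := by
    ext j d
    simp only [Pi.smul_apply, coeff_smul, TexData.coeff_tangent, Finset.mul_sum]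
    refine Finset.sum_congr rfl fun ν _ => ?_
    simp only [cf, Pi.smul_apply, coeff_smul]
    ring

theorem TexData.isTextile_tangent (F : TexData k n q p) (a : Fin q → MvPowerSeries (Fin n) k) :
    IsTextile (F.tangent a) :=
  isTextile_iff_coeff.2 ⟨fun jd => ∑ ν ∈ (F jd).vars,
    MvPolynomial.C (MvPolynomial.eval (cf a) (MvPolynomial.pderiv ν (F jd))) * MvPolynomial.X ν,
    fun v j d => by simp [TexData.coeff_tangent]⟩

end TextileMaps

section Order

variable {k : Type} [Field k] {n q r : ℕ}

theorem ordV_zero : ordV (0 : Fin q → MvPowerSeries (Fin n) k) = ⊤ :=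
  sInf_eq_top.2 fun _ ⟨_, _, hne, _⟩ => absurd (by simp) hne

theorem ordV_neg (x : Fin q → MvPowerSeries (Fin n) k) : ordV (-x) = ordV x := by
  simp [ordV]

theorem ordV_sub_comm (x y : Fin q → MvPowerSeries (Fin n) k) : ordV (x - y) = ordV (y - x) := by
  rw [← neg_sub, ordV_neg]

theorem coeff_eq_zero_of_lt_ordV {x : Fin q → MvPowerSeries (Fin n) k} {j : Fin q}
    {d : Fin n →₀ ℕ} (h : ((d.sum fun _ e => e : ℕ) : ℕ∞) < ordV x) : coeff d (x j) = 0 := by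
  by_contra hne
  exact (sInf_le ⟨j, d, hne, rfl⟩ : ordV x ≤ _).not_gt h

theorem mem_nbhd_iff {l : ℕ} {x : Fin q → MvPowerSeries (Fin n) k} :
    x ∈ nbhd k n q l ↔ (l : ℕ∞) ≤ ordV x := by
  refine ⟨fun hx => le_sInf ?_, fun h j d hd => coeff_eq_zero_of_lt_ordV (h.trans_lt' ?_)⟩
  · rintro _ ⟨j, d, hne, rfl⟩
    exact Nat.cast_le.2 (not_lt.1 fun hd => hne (hx j d hd))
  · exact_mod_cast hd

theorem zero_mem_nbhd {l : ℕ} : (0 : Fin q → MvPowerSeries (Fin n) k) ∈ nbhd k n q l :=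
  fun _ _ _ => by simp

theorem add_mem_nbhd {l : ℕ} {x y : Fin q → MvPowerSeries (Fin n) k}
    (hx : x ∈ nbhd k n q l) (hy : y ∈ nbhd k n q l) : x + y ∈ nbhd k n q l := fun j d hd => by
  simp [hx j d hd, hy j d hd]

theorem sub_mem_nbhd {l : ℕ} {x y : Fin q → MvPowerSeries (Fin n) k}
    (hx : x ∈ nbhd k n q l) (hy : y ∈ nbhd k n q l) : x - y ∈ nbhd k n q l := fun j d hd => by
  simp [hx j d hd, hy j d hd]

def ContractiveOn (φ : (Fin q → MvPowerSeries (Fin n) k) → Fin r → MvPowerSeries (Fin n) k)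
    (S : Set (Fin q → MvPowerSeries (Fin n) k)) : Prop :=
  ∀ a ∈ S, ∀ b ∈ S, a ≠ b → ordV (a - b) < ordV (φ a - φ b)

theorem ContractiveOn.natCast_lt_ordV_sub
    {φ : (Fin q → MvPowerSeries (Fin n) k) → Fin r → MvPowerSeries (Fin n) k}
    {S : Set (Fin q → MvPowerSeries (Fin n) k)} (hφ : ContractiveOn φ S)
    {a b : Fin q → MvPowerSeries (Fin n) k} (ha : a ∈ S) (hb : b ∈ S) {N : ℕ}
    (hN : (N : ℕ∞) ≤ ordV (a - b)) : (N : ℕ∞) < ordV (φ a - φ b) := by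
  obtain rfl | hab := eq_or_ne a b
  · simp [ordV_zero]
  · exact hN.trans_lt (hφ a ha b hb hab)

end Order

section ContractiveInverse

variable {k : Type} [Field k] {n q : ℕ}

def idAddInvApprox (φ : (Fin q → MvPowerSeries (Fin n) k) → Fin q → MvPowerSeries (Fin n) k) :
    ℕ → (Fin q → MvPowerSeries (Fin n) k) → Fin q → MvPowerSeries (Fin n) k
  | 0 => id
  | e + 1 => fun b => b - φ (idAddInvApprox φ e b)

/-- The inverse of `id + φ` for contractive `φ`: the coefficients of degree `d` of the
fixed-point iteration `x ↦ b - φ x` no longer change after `d` steps. -/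
def idAddInv (φ : (Fin q → MvPowerSeries (Fin n) k) → Fin q → MvPowerSeries (Fin n) k)
    (b : Fin q → MvPowerSeries (Fin n) k) : Fin q → MvPowerSeries (Fin n) k :=
  fun j d => coeff d (idAddInvApprox φ (d.sum fun _ e => e) b j)

theorem isTextile_idAddInvApprox
    {φ : (Fin q → MvPowerSeries (Fin n) k) → Fin q → MvPowerSeries (Fin n) k}
    (hφ : IsTextile φ) (e : ℕ) : IsTextile (idAddInvApprox φ e) := by
  induction e with
  | zero => exact isTextile_id
  | succ e ih => exact isTextile_id.sub (hφ.comp ih)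

theorem isTextile_idAddInv
    {φ : (Fin q → MvPowerSeries (Fin n) k) → Fin q → MvPowerSeries (Fin n) k}
    (hφ : IsTextile φ) : IsTextile (idAddInv φ) := by
  choose P hP using fun e => isTextile_iff_coeff.1 (isTextile_idAddInvApprox hφ e)
  exact isTextile_iff_coeff.2 ⟨fun jd => P (jd.2.sum fun _ e => e) jd, fun c j d => hP _ c j d⟩

variable {φ : (Fin q → MvPowerSeries (Fin n) k) → Fin q → MvPowerSeries (Fin n) k} {l : ℕ}

theorem ContractiveOn.idAddInvApprox_add_self (hφ : ContractiveOn φ (nbhd k n q l))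
    (hφ0 : φ 0 = 0) {a : Fin q → MvPowerSeries (Fin n) k} (ha : a ∈ nbhd k n q l) (e : ℕ) :
    idAddInvApprox φ e (a + φ a) ∈ nbhd k n q l ∧
      (e : ℕ∞) < ordV (idAddInvApprox φ e (a + φ a) - a) := by
  induction e with
  | zero =>
    have hlt (N : ℕ) (hN : (N : ℕ∞) ≤ ordV a) : (N : ℕ∞) < ordV (φ a) := by
      simpa [hφ0] using hφ.natCast_lt_ordV_sub ha zero_mem_nbhd (by simpa using hN)
    refine ⟨add_mem_nbhd ha (mem_nbhd_iff.2 (hlt l (mem_nbhd_iff.1 ha)).le), ?_⟩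
    simpa [idAddInvApprox] using hlt 0 zero_le
  | succ e ih =>
    obtain ⟨hx, hxa⟩ := ih
    set x := idAddInvApprox φ e (a + φ a)
    have hstep : idAddInvApprox φ (e + 1) (a + φ a) - a = φ a - φ x := by
      simp only [idAddInvApprox, x]
      abel
    have hlt (N : ℕ) (hN : (N : ℕ∞) ≤ ordV (a - x)) : (N : ℕ∞) < ordV (φ a - φ x) :=
      hφ.natCast_lt_ordV_sub ha hx hN
    refine ⟨?_, ?_⟩
    · rw [← sub_add_cancel (idAddInvApprox φ (e + 1) (a + φ a)) a, hstep]
      exact add_mem_nbhd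
        (mem_nbhd_iff.2 (hlt l (mem_nbhd_iff.1 (sub_mem_nbhd ha hx))).le) ha
    · rw [hstep]
      exact hlt (e + 1) (by rw [ordV_sub_comm]; exact_mod_cast Order.add_one_le_of_lt hxa)

theorem ContractiveOn.idAddInv_add_self (hφ : ContractiveOn φ (nbhd k n q l)) (hφ0 : φ 0 = 0)
    {a : Fin q → MvPowerSeries (Fin n) k} (ha : a ∈ nbhd k n q l) : idAddInv φ (a + φ a) = a := by
  ext j d
  exact sub_eq_zero.1 (coeff_eq_zero_of_lt_ordV (hφ.idAddInvApprox_add_self hφ0 ha _).2)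

end ContractiveInverse

section Straightening

variable {k : Type} [Field k] {n m p : ℕ}

theorem exists_textile_straightening
    {f ℓ : (Fin m → MvPowerSeries (Fin n) k) → Fin p → MvPowerSeries (Fin n) k}
    {σ : (Fin p → MvPowerSeries (Fin n) k) → Fin m → MvPowerSeries (Fin n) k}
    {w : (Fin m → MvPowerSeries (Fin n) k) → Fin m → MvPowerSeries (Fin n) k}
    {S : Set (Fin m → MvPowerSeries (Fin n) k)}
    (hf : IsTextile f) (hℓ : IsTextile ℓ) (hσ : IsTextile σ) (hw : IsTextile w)
    (hσℓ : ∀ z, σ (ℓ z) = z) (hwσf : ∀ a ∈ S, w (σ (f a)) = a)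
    (h0S : 0 ∈ S) (hf0 : f 0 = 0) (hℓ0 : ℓ 0 = 0) :
    ∃ v vinv : (Fin p → MvPowerSeries (Fin n) k) → Fin p → MvPowerSeries (Fin n) k,
      IsTextile v ∧ IsTextile vinv ∧ v 0 = 0 ∧ (∀ b ∈ f '' S, vinv (v b) = b) ∧
      ∀ a ∈ S, v (f a) = ℓ (σ (f a)) := by
  set ψ := fun b => ℓ (σ b) - f (w (σ b))
  have hψ : IsTextile ψ := (hℓ.comp hσ).sub (hf.comp (hw.comp hσ))
  have hψf : ∀ a ∈ S, ψ (f a) = ℓ (σ (f a)) - f a := fun a ha => by simp only [ψ, hwσf a ha]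
  have hψℓ : ∀ z, ψ (ℓ (σ z)) = ψ z := fun z => by simp only [ψ, hσℓ]
  have hσ0 : σ 0 = 0 := by rw [← hℓ0, hσℓ]
  refine ⟨fun b => b + ψ b, fun c => c - ψ c, isTextile_id.add hψ, isTextile_id.sub hψ,
    ?_, ?_, fun a ha => by simp only [hψf a ha, add_sub_cancel]⟩
  · have hw0 : w 0 = 0 := by simpa [hf0, hσ0] using hwσf 0 h0S
    simp [ψ, hσ0, hℓ0, hw0, hf0]
  · rintro _ ⟨a, ha, rfl⟩
    simp only [hψf a ha, add_sub_cancel, hψℓ, sub_sub_cancel]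

end Straightening

section ConstantRank

variable {k : Type} [Field k] {n m p : ℕ}

def constCurve (v : Fin m → MvPowerSeries (Fin n) k) : TexData k n 1 m :=
  fun jd => MvPolynomial.C (coeff jd.2 (v jd.1))

theorem cEval_constCurve (v : Fin m → MvPowerSeries (Fin n) k) (s : MvPowerSeries (Fin n) k) :
    CEval (constCurve v) s = v := by
  ext j d
  exact MvPolynomial.eval_C _

theorem zero_mem_cNbhd_zero : (0 : MvPowerSeries (Fin n) k) ∈ cNbhd k n 0 :=
  fun _ hd => absurd hd (Nat.not_lt_zero _)

theorem HasConstRankAtZero.eq_zero_of_tangent_eq_zero {F : TexData k n m p}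
    {U : Set (Fin m → MvPowerSeries (Fin n) k)} {J : Set (Fin p → MvPowerSeries (Fin n) k)}
    (h : HasConstRankAtZero F U J) (hU : 0 ∈ U) (hJ : 0 ∈ J)
    {z : Fin m → MvPowerSeries (Fin n) k} (hz : F.tangent 0 z = 0) : z = 0 := by
  obtain ⟨ρ, _, _, _, huniq⟩ := h 0 (constCurve 0) (fun s _ => by rwa [cEval_constCurve])
    (cEval_constCurve 0 0) (constCurve 0)
  have hρ : ∀ w, F.tangent 0 w = 0 → w = CEval ρ 0 := fun w hw => by
    have := (huniq (constCurve w) (constCurve 0) (fun s _ => by rwa [cEval_constCurve])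
      (fun s _ => by simp only [cEval_constCurve, hw, add_zero]) 0 zero_mem_cNbhd_zero).1
    rwa [cEval_constCurve] at this
  exact (hρ z hz).trans (hρ 0 (F.isLinearMap_tangent 0).map_zero).symm

end ConstantRank

theorem rank_theorem_textile_general
    {k : Type} [Field k] {n m p : ℕ} (l : ℕ)
    (U : Set (Fin m → MvPowerSeries (Fin n) k)) (hU : U = nbhd k n m l)
    (F : TexData k n m p) (hf0 : F.eval 0 = 0)
    (σd : TexData k n p m) (hσ_lin : IsLinearMap k σd.eval)
    (hscis : ∀ z, F.tangent 0 (σd.eval (F.tangent 0 z)) = F.tangent 0 z)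
    (hcontr : ∀ a ∈ U, ∀ b ∈ U, a ≠ b →
      ordV (a - b) < ordV (σd.eval (F.eval a - F.tangent 0 a) -
        σd.eval (F.eval b - F.tangent 0 b)))
    (hrank : HasConstRankAtZero F U {b | F.tangent 0 (σd.eval b) = 0}) :
    ∃ (u uinv : (Fin m → MvPowerSeries (Fin n) k) → Fin m → MvPowerSeries (Fin n) k)
      (v vinv : (Fin p → MvPowerSeries (Fin n) k) → Fin p → MvPowerSeries (Fin n) k)
      (l' : ℕ), l ≤ l' ∧
      IsTextile u ∧ IsTextile uinv ∧ IsTextile v ∧ IsTextile vinv ∧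
      u 0 = 0 ∧ v 0 = 0 ∧
      (∀ a ∈ nbhd k n m l', uinv (u a) = a) ∧
      (∀ b ∈ F.eval '' nbhd k n m l', vinv (v b) = b) ∧
      (∀ a ∈ nbhd k n m l', v (F.eval a) = F.tangent 0 (u a)) := by
  subst hU
  have hℓ := F.isLinearMap_tangent 0
  have hinj : ∀ z, F.tangent 0 z = 0 → z = 0 := fun _ => hrank.eq_zero_of_tangent_eq_zero
    zero_mem_nbhd (show F.tangent 0 (σd.eval 0) = 0 by rw [hσ_lin.map_zero, hℓ.map_zero])
  have hσℓ : ∀ z, σd.eval (F.tangent 0 z) = z := fun z =>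
    sub_eq_zero.1 (hinj _ (by rw [hℓ.map_sub, hscis, sub_self]))
  set φ := fun a => σd.eval (F.eval a - F.tangent 0 a)
  have hφ : IsTextile φ := σd.isTextile_eval.comp (F.isTextile_eval.sub (F.isTextile_tangent 0))
  have hφ0 : φ 0 = 0 := by simp [φ, hf0, hℓ.map_zero, hσ_lin.map_zero]
  have hu : ∀ a, a + φ a = σd.eval (F.eval a) := fun a => by simp [φ, hσ_lin.map_sub, hσℓ]
  have hinv : ∀ a ∈ nbhd k n m l, idAddInv φ (a + φ a) = a := fun a ha =>
    ContractiveOn.idAddInv_add_self hcontr hφ0 ha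
  obtain ⟨v, vinv, hv, hvinv, hv0, hvinv_v, hvf⟩ := exists_textile_straightening
    F.isTextile_eval (F.isTextile_tangent 0) σd.isTextile_eval (isTextile_idAddInv hφ) hσℓ
    (fun a ha => by rw [← hu]; exact hinv a ha) zero_mem_nbhd hf0 hℓ.map_zero
  exact ⟨fun a => a + φ a, idAddInv φ, v, vinv, l, le_rfl, isTextile_id.add hφ,
    isTextile_idAddInv hφ, hv, hvinv, by simp [hφ0], hv0, hinv, hvinv_v,
    fun a ha => by simp only [hvf a ha, hu]⟩

/-- **Rank Theorem for textile maps.**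
Let `f = ℓ + h` be a textile map on `U = m^l·C^m` with `f(0) = 0` and `ℓ = T_0 f`. Assume
`ℓ` admits a scission `σ` for which `σ∘h` is contractive on `U`, and that `f` has constant
rank at `0` with respect to `ker(ℓσ)`. Then there are textile maps `u` and `v`, invertible
locally at `0` (with textile local inverses), with `v ∘ f ∘ u⁻¹ = ℓ`, i.e. `v(f a) = ℓ(u a)`
for all `a` near `0`. -/
theorem rank_theorem_textile
    {k : Type} [Field k] [CharZero k] {n m p : ℕ} (l : ℕ)
    (U : Set (Fin m → MvPowerSeries (Fin n) k)) (hU : U = nbhd k n m l)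
    (F : TexData k n m p) (hf0 : F.eval 0 = 0)
    (σd : TexData k n p m) (hσ_lin : IsLinearMap k σd.eval)
    (hscis : ∀ z, F.tangent 0 (σd.eval (F.tangent 0 z)) = F.tangent 0 z)
    (hcontr : ∀ a ∈ U, ∀ b ∈ U, a ≠ b →
      ordV (a - b) < ordV (σd.eval (F.eval a - F.tangent 0 a) -
        σd.eval (F.eval b - F.tangent 0 b)))
    (hrank : HasConstRankAtZero F U {b | F.tangent 0 (σd.eval b) = 0}) :
    ∃ (u uinv : (Fin m → MvPowerSeries (Fin n) k) → Fin m → MvPowerSeries (Fin n) k)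
      (v vinv : (Fin p → MvPowerSeries (Fin n) k) → Fin p → MvPowerSeries (Fin n) k)
      (l' : ℕ), l ≤ l' ∧
      IsTextile u ∧ IsTextile uinv ∧ IsTextile v ∧ IsTextile vinv ∧
      u 0 = 0 ∧ v 0 = 0 ∧
      (∀ a ∈ nbhd k n m l', uinv (u a) = a) ∧
      (∀ b ∈ F.eval '' nbhd k n m l', vinv (v b) = b) ∧
      (∀ a ∈ nbhd k n m l', v (F.eval a) = F.tangent 0 (u a)) :=
  rank_theorem_textile_general l U hU F hf0 σd hσ_lin hscis hcontr hrank
end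
end
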